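/- Let x be a grouplike element g_x and a g_x-primitive element x of a Hopf algebra with x g = χ^x(g)·g x for all grouplike g, and suppose p = χ^x(g_x). Then Δ(x^n) = x^n ⊗ 1 + g_x^n ⊗ x^n + Σ_{k=1}^{n-1} C_p(n,k) g_x^k x^{n-k} ⊗ x^k, where C_p(n,k) is the Gaussian binomial coefficient at p. -/
import Mathlib

open Coalgebra TensorProduct

/-- The Gaussian (q-)binomial coefficient, defined by the recursion
`C_q(n+1, k+1) = C_q(n, k) + q^(k+1) * C_q(n, k+1)`, `C_q(n, 0) = 1`. -/
def qBinom {k : Type*} [Field k] (q : k) : ℕ → ℕ → k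
  | _, 0 => 1
  | 0, _ + 1 => 0
  | n + 1, j + 1 => qBinom q n j + q ^ (j + 1) * qBinom q n (j + 1)

lemma qBinom_zero_right {k : Type*} [Field k] (q : k) (n : ℕ) : qBinom q n 0 = 1 := by
  cases n <;> rfl

lemma qBinom_eq_zero {k : Type*} [Field k] (q : k) {n j : ℕ} (h : n < j) :
    qBinom q n j = 0 := by
  induction n generalizing j with
  | zero => cases j with
    | zero => omega
    | succ j => rfl
  | succ n ih =>
    cases j with
    | zero => omega
    | succ j => simp [qBinom, ih (by omega : n < j), ih (by omega : n < j + 1)]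

lemma qBinom_self {k : Type*} [Field k] (q : k) (n : ℕ) : qBinom q n n = 1 := by
  induction n with
  | zero => rfl
  | succ n ih => simp [qBinom, ih, qBinom_eq_zero q (Nat.lt_succ_self n)]

lemma qbinom_comm_pow {k A : Type*} [Field k] [Ring A] [Algebra k A]
    (p : k) (a b : A) (h : a * b = p • (b * a)) (i : ℕ) :
    a * b ^ i = p ^ i • (b ^ i * a) := by
  induction i with
  | zero => simp
  | succ i ih =>
    calc a * b ^ (i + 1) = (a * b) * b ^ i := by rw [pow_succ', mul_assoc]
      _ = p • (b * (a * b ^ i)) := by rw [h, smul_mul_assoc, mul_assoc]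
      _ = p • (b * (p ^ i • (b ^ i * a))) := by rw [ih]
      _ = p ^ (i + 1) • (b ^ (i + 1) * a) := by
          rw [mul_smul_comm, smul_smul, ← mul_assoc, ← pow_succ', ← pow_succ']

lemma qbinom_add_pow {k A : Type*} [Field k] [Ring A] [Algebra k A]
    (p : k) (a b : A) (h : a * b = p • (b * a)) (n : ℕ) :
    (a + b) ^ n = ∑ i ∈ Finset.range (n + 1), qBinom p n i • (b ^ i * a ^ (n - i)) := by
  induction n with
  | zero => simp [qBinom]
  | succ n ih =>
    rw [pow_succ', add_mul, ih, Finset.mul_sum, Finset.mul_sum]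
    have hA : ∀ i ∈ Finset.range (n + 1),
        a * qBinom p n i • (b ^ i * a ^ (n - i)) =
          (p ^ i * qBinom p n i) • (b ^ i * a ^ (n - i + 1)) := by
      intro i _
      rw [mul_smul_comm, ← mul_assoc, qbinom_comm_pow p a b h, smul_mul_assoc,
        smul_smul, mul_assoc, ← pow_succ', mul_comm (qBinom p n i) (p ^ i)]
    have hB : ∀ i ∈ Finset.range (n + 1),
        b * qBinom p n i • (b ^ i * a ^ (n - i)) =
          qBinom p n i • (b ^ (i + 1) * a ^ (n - i)) := by
      intro i _
      rw [mul_smul_comm, ← mul_assoc, ← pow_succ']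
    rw [Finset.sum_congr rfl hA, Finset.sum_congr rfl hB]
    -- RHS manipulation
    rw [Finset.sum_range_succ' (fun j => qBinom p (n + 1) j • (b ^ j * a ^ (n + 1 - j)))]
    have hrec : ∀ j ∈ Finset.range (n + 1),
        qBinom p (n + 1) (j + 1) • (b ^ (j + 1) * a ^ (n + 1 - (j + 1))) =
          qBinom p n j • (b ^ (j + 1) * a ^ (n - j)) +
            (p ^ (j + 1) * qBinom p n (j + 1)) • (b ^ (j + 1) * a ^ (n - j)) := by
      intro j _
      have : n + 1 - (j + 1) = n - j := by omega
      rw [this, show qBinom p (n + 1) (j + 1)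
            = qBinom p n j + p ^ (j + 1) * qBinom p n (j + 1) from rfl, add_smul]
    rw [Finset.sum_congr rfl hrec, Finset.sum_add_distrib]
    -- now handle first sum on LHS
    have hL : ∑ i ∈ Finset.range (n + 1),
        (p ^ i * qBinom p n i) • (b ^ i * a ^ (n - i + 1)) =
        (∑ j ∈ Finset.range n,
          (p ^ (j + 1) * qBinom p n (j + 1)) • (b ^ (j + 1) * a ^ (n - (j + 1) + 1)))
          + (1 : k) • (b ^ 0 * a ^ (n + 1)) := by
      rw [Finset.sum_range_succ' (fun i => (p ^ i * qBinom p n i) • (b ^ i * a ^ (n - i + 1)))]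
      simp [qBinom_zero_right]
    have hR : ∑ j ∈ Finset.range (n + 1),
        (p ^ (j + 1) * qBinom p n (j + 1)) • (b ^ (j + 1) * a ^ (n - j)) =
        ∑ j ∈ Finset.range n,
          (p ^ (j + 1) * qBinom p n (j + 1)) • (b ^ (j + 1) * a ^ (n - j)) := by
      rw [Finset.sum_range_succ]
      simp [qBinom_eq_zero p (Nat.lt_succ_self n)]
    have hidx : ∀ j ∈ Finset.range n,
        (p ^ (j + 1) * qBinom p n (j + 1)) • (b ^ (j + 1) * a ^ (n - (j + 1) + 1)) =
          (p ^ (j + 1) * qBinom p n (j + 1)) • (b ^ (j + 1) * a ^ (n - j)) := by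
      intro j hj
      rw [Finset.mem_range] at hj
      have : n - (j + 1) + 1 = n - j := by omega
      rw [this]
    rw [hL, Finset.sum_congr rfl hidx, hR]
    simp [qBinom_zero_right]
    abel

/-- For a `g`-primitive semi-invariant `x` with `x g = p (g x)`, `p = χˣ(g)`:
`Δ(xⁿ) = xⁿ ⊗ 1 + gⁿ ⊗ xⁿ + Σ_{i=1}^{n-1} C_p(n,i) gⁱ x^{n-i} ⊗ xⁱ`. -/
theorem comul_pow_skewPrimitive {k H : Type*} [Field k] [Ring H] [Bialgebra k H]
    (g x : H) (p : k)
    (hg : comul (R := k) g = g ⊗ₜ[k] g ∧ counit (R := k) g = (1 : k))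
    (hx : comul (R := k) x = x ⊗ₜ[k] 1 + g ⊗ₜ[k] x)
    (hp : x * g = p • (g * x)) (n : ℕ) (hn : 1 ≤ n) :
    comul (R := k) (x ^ n) =
      (x ^ n) ⊗ₜ[k] 1 + (g ^ n) ⊗ₜ[k] (x ^ n) +
        ∑ i ∈ Finset.Ioo 0 n, qBinom p n i • ((g ^ i * x ^ (n - i)) ⊗ₜ[k] (x ^ i)) := by
  have hab : (x ⊗ₜ[k] (1 : H)) * (g ⊗ₜ[k] x) = p • ((g ⊗ₜ[k] x) * (x ⊗ₜ[k] (1 : H))) := by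
    rw [Algebra.TensorProduct.tmul_mul_tmul, Algebra.TensorProduct.tmul_mul_tmul,
      one_mul, mul_one, hp, TensorProduct.smul_tmul']
  rw [Bialgebra.comul_pow, hx, qbinom_add_pow p _ _ hab n]
  have hterm : ∀ i, ((g ⊗ₜ[k] x) ^ i) * ((x ⊗ₜ[k] (1 : H)) ^ (n - i)) =
      (g ^ i * x ^ (n - i)) ⊗ₜ[k] (x ^ i) := by
    intro i
    rw [Algebra.TensorProduct.tmul_pow, Algebra.TensorProduct.tmul_pow,
      Algebra.TensorProduct.tmul_mul_tmul, one_pow, mul_one]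
  simp only [hterm]
  -- split off i = 0 and i = n
  rw [Finset.sum_range_succ, Finset.range_eq_Ico, ← Finset.Ioo_insert_left (by omega : 0 < n),
    Finset.sum_insert (by simp)]
  simp only [qBinom_self, qBinom_zero_right, pow_zero, one_mul, Nat.sub_zero, Nat.sub_self,
    mul_one, one_smul]
  abel
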